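/- Let R ∈ ℝ^m and S ∈ ℝ^n be nonnegative real vectors with equal component sums. (I) There exists an m×n nonnegative real matrix A with row sum vector R and column sum vector S satisfying r_0 A = A (i.e. a_{i,j} = a_{m+1−i, j} for all i,j) if and only if R is palindromic. (II) If R and S are nonnegative integer vectors, there exists such a matrix with nonnegative integer entries if and only if R is palindromic and, in addition, if m is even then every component of S is even, and if m is odd then r_⌈m/2⌉ ≥ o(S), where o(S) is the number of odd components of S. -/

import Mathlib

/-!
Summing a palindromic vector over `Fin m` gives twice the sum over the rows above the mirror
line plus the middle entry when `m` is odd. Applied to the columns of an `r_0`-symmetric integer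
matrix, this makes every column sum even when `m` is even, and congruent mod 2 to its middle-row
entry when `m` is odd, so each odd column needs a positive entry in the middle row, which gives
`o(S) ≤ r_⌈m/2⌉`. Conversely, solve an unconstrained transportation problem for the rows above
the mirror line (plus half of what the middle row has left after one unit per odd column), with
column sums `⌊s_j / 2⌋`; adding its mirror image and a middle row of parities `s_j mod 2` gives a
symmetric solution. Over `ℝ` the rank-one matrix `r_i s_j / Σ s` is symmetric once `R` is
palindromic.
-/

open Finset

theorem Pi.single_one_le_of_ne_zero {ι : Type*} [DecidableEq ι] {f : ι → ℕ} {a : ι}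
    (h : f a ≠ 0) : Pi.single a 1 ≤ f := fun k => by
  rcases eq_or_ne k a with rfl | hk
  · simpa [Nat.one_le_iff_ne_zero]
  · simp [hk]

theorem exists_nat_matrix_sum_rows_sum_cols {ι κ : Type*} [Fintype ι] [Fintype κ]
    [DecidableEq ι] [DecidableEq κ] (r : ι → ℕ) (c : κ → ℕ) (h : ∑ i, r i = ∑ j, c j) :
    ∃ B : Matrix ι κ ℕ, (∀ i, ∑ j, B i j = r i) ∧ ∀ j, ∑ i, B i j = c j := by
  induction hT : ∑ i, r i generalizing r c with
  | zero =>
    have hr := sum_eq_zero_iff.mp hT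
    have hc := sum_eq_zero_iff.mp (h ▸ hT)
    exact ⟨0, fun i => by simp [hr i], fun j => by simp [hc j]⟩
  | succ T ih =>
    obtain ⟨i, -, hi⟩ := exists_ne_zero_of_sum_ne_zero (by omega : ∑ i, r i ≠ 0)
    obtain ⟨j, -, hj⟩ := exists_ne_zero_of_sum_ne_zero (by omega : ∑ j, c j ≠ 0)
    obtain ⟨r, rfl⟩ := exists_add_of_le (Pi.single_one_le_of_ne_zero hi)
    obtain ⟨c, rfl⟩ := exists_add_of_le (Pi.single_one_le_of_ne_zero hj)
    simp only [Pi.add_apply, sum_add_distrib, sum_pi_single', mem_univ, if_true] at h hT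
    obtain ⟨B, hrow, hcol⟩ := ih r c (by omega) (by omega)
    refine ⟨Matrix.single i j 1 + B, fun i' => ?_, fun j' => ?_⟩
    · simp [sum_add_distrib, hrow, Matrix.single_apply, ite_and, Pi.single_apply, eq_comm]
    · simp [sum_add_distrib, hcol, Matrix.single_apply, ite_and, Pi.single_apply, eq_comm]

theorem sum_mod_two_eq_card_odd {κ : Type*} [Fintype κ] (s : κ → ℕ) :
    ∑ j, s j % 2 = #{j | s j % 2 = 1} := by
  rw [card_filter]
  exact sum_congr rfl fun j _ => by split_ifs <;> omega

namespace Fin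

variable {m : ℕ}

/-- The paper's middle row `⌈m/2⌉`, zero-based. -/
def middle (hm : m % 2 = 1) : Fin m :=
  ⟨m / 2, Nat.div_lt_self (by omega) one_lt_two⟩

@[simp]
theorem val_middle (hm : m % 2 = 1) : (middle hm : ℕ) = m / 2 :=
  rfl

theorem sum_comp_rev {M : Type*} [AddCommMonoid M] (f : Fin m → M) :
    ∑ i : Fin m, f i.rev = ∑ i, f i :=
  Equiv.sum_comp revPerm f

theorem sum_eq_two_nsmul_sum_add_sum_of_rev {M : Type*} [AddCommMonoid M] (f : Fin m → M)
    (hf : ∀ i, f i = f i.rev) :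
    ∑ i, f i = 2 • ∑ i with 2 * i.val + 1 < m, f i + ∑ i with 2 * i.val + 1 = m, f i := by
  have upper : ∑ i with m < 2 * i.val + 1, f i = ∑ i with 2 * i.val + 1 < m, f i :=
    sum_nbij' rev rev (by simp [val_rev]; omega) (by simp [val_rev]; omega)
      (by simp) (by simp) (fun i _ => hf i)
  have trichotomy : ∀ i : Fin m, f i = (if 2 * i.val + 1 < m then f i else 0) +
      (if 2 * i.val + 1 = m then f i else 0) + (if m < 2 * i.val + 1 then f i else 0) := by
    intro i
    split_ifs <;> first | omega | simp
  rw [sum_congr rfl fun i _ => trichotomy i, sum_add_distrib, sum_add_distrib, ← sum_filter,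
    ← sum_filter, ← sum_filter, upper, two_nsmul, add_right_comm]

theorem filter_two_mul_add_one_eq_of_even (hm : m % 2 = 0) :
    ({i | 2 * i.val + 1 = m} : Finset (Fin m)) = ∅ := by
  ext i
  simp
  omega

theorem filter_two_mul_add_one_eq_of_odd (hm : m % 2 = 1) :
    ({i | 2 * i.val + 1 = m} : Finset (Fin m)) = {middle hm} := by
  ext i
  simp [Fin.ext_iff]
  omega

theorem sum_ite_two_mul_add_one_eq {M : Type*} [AddCommMonoid M] (c : M) :
    ∑ i : Fin m, (if 2 * i.val + 1 = m then c else 0) = (m % 2) • c := by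
  rw [← sum_filter]
  rcases Nat.mod_two_eq_zero_or_one m with hm | hm
  · simp [filter_two_mul_add_one_eq_of_even hm, hm]
  · simp [filter_two_mul_add_one_eq_of_odd hm, hm]

theorem sum_mod_two_of_rev_of_even (f : Fin m → ℕ) (hf : ∀ i, f i = f i.rev) (hm : m % 2 = 0) :
    (∑ i, f i) % 2 = 0 := by
  simp [sum_eq_two_nsmul_sum_add_sum_of_rev f hf, filter_two_mul_add_one_eq_of_even hm]

theorem sum_mod_two_of_rev_of_odd (f : Fin m → ℕ) (hf : ∀ i, f i = f i.rev) (hm : m % 2 = 1) :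
    (∑ i, f i) % 2 = f (middle hm) % 2 := by
  simp [sum_eq_two_nsmul_sum_add_sum_of_rev f hf, filter_two_mul_add_one_eq_of_odd hm]

end Fin

section MirrorTransport

variable {m n : ℕ}

theorem conditions_of_nat_mirror_symm (R : Fin m → ℕ) (S : Fin n → ℕ)
    (A : Matrix (Fin m) (Fin n) ℕ) (hrow : ∀ i, ∑ j, A i j = R i) (hcol : ∀ j, ∑ i, A i j = S j)
    (hA : ∀ i j, A i j = A i.rev j) :
    (∀ i, R i = R i.rev) ∧ (m % 2 = 0 → ∀ j, S j % 2 = 0) ∧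
      ∀ hm : m % 2 = 1, #{j | S j % 2 = 1} ≤ R (Fin.middle hm) := by
  refine ⟨fun i => ?_, fun hm j => ?_, fun hm => ?_⟩
  · rw [← hrow, ← hrow]
    exact sum_congr rfl fun j _ => hA i j
  · rw [← hcol]
    exact Fin.sum_mod_two_of_rev_of_even _ (fun i => hA i j) hm
  · have hmid : ∀ j, S j % 2 = A (Fin.middle hm) j % 2 := fun j => by
      rw [← hcol]
      exact Fin.sum_mod_two_of_rev_of_odd _ (fun i => hA i j) hm
    calc #{j | S j % 2 = 1} = #{j | S j % 2 = 1} • 1 := by rw [smul_eq_mul, mul_one]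
      _ ≤ ∑ j with S j % 2 = 1, A (Fin.middle hm) j :=
        card_nsmul_le_sum _ _ _ fun j hj => by
          have := hmid j
          have := (mem_filter.mp hj).2
          omega
      _ ≤ ∑ j, A (Fin.middle hm) j := sum_le_sum_of_subset (filter_subset _ _)
      _ = R (Fin.middle hm) := hrow _

theorem exists_nat_mirror_symm_sum_rows_sum_cols (h : Fin m → ℕ) (q p : Fin n → ℕ)
    (hsum : ∑ i, h i = ∑ j, q j) :
    ∃ A : Matrix (Fin m) (Fin n) ℕ,
      (∀ i, ∑ j, A i j = h i + h i.rev + if 2 * i.val + 1 = m then ∑ j, p j else 0) ∧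
      (∀ j, ∑ i, A i j = 2 * q j + m % 2 * p j) ∧ ∀ i j, A i j = A i.rev j := by
  obtain ⟨B, hrow, hcol⟩ := exists_nat_matrix_sum_rows_sum_cols h q hsum
  refine ⟨fun i j => B i j + B i.rev j + if 2 * i.val + 1 = m then p j else 0,
    fun i => ?_, fun j => ?_, fun i j => ?_⟩
  · simp only [sum_add_distrib, hrow, sum_ite_irrel, sum_const_zero]
  · simp only [sum_add_distrib, Fin.sum_comp_rev fun i => B i j, hcol,
      Fin.sum_ite_two_mul_add_one_eq, smul_eq_mul]
    ring
  · have hmid_rev : 2 * i.rev.val + 1 = m ↔ 2 * i.val + 1 = m := by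
      rw [Fin.val_rev]
      omega
    simp only [Fin.rev_rev, hmid_rev, add_comm (B i j)]

theorem exists_nat_mirror_symm_of_conditions (R : Fin m → ℕ) (S : Fin n → ℕ)
    (hsum : ∑ i, R i = ∑ j, S j) (hpal : ∀ i, R i = R i.rev)
    (heven : m % 2 = 0 → ∀ j, S j % 2 = 0)
    (hodd : ∀ hm : m % 2 = 1, #{j | S j % 2 = 1} ≤ R (Fin.middle hm)) :
    ∃ A : Matrix (Fin m) (Fin n) ℕ, (∀ i, ∑ j, A i j = R i) ∧ (∀ j, ∑ i, A i j = S j) ∧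
      ∀ i j, A i j = A i.rev j := by
  have hS : ∑ j, S j = 2 * ∑ j, S j / 2 + #{j | S j % 2 = 1} := by
    rw [← sum_mod_two_eq_card_odd, mul_sum, ← sum_add_distrib]
    exact sum_congr rfl fun j _ => (Nat.div_add_mod _ _).symm
  set o := #{j | S j % 2 = 1}
  have ho : m % 2 * o = o := by
    rcases Nat.mod_two_eq_zero_or_one m with hm | hm
    · rw [hm, zero_mul, eq_comm, card_eq_zero, filter_eq_empty_iff]
      exact fun j _ => by have := heven hm j; omega
    · rw [hm, one_mul]
  have hmid : ∀ i : Fin m, 2 * i.val + 1 = m → o ≤ R i ∧ R i % 2 = o % 2 := by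
    intro i hi
    have hm : m % 2 = 1 := by omega
    rw [show i = Fin.middle hm from Fin.ext (by simp; omega)]
    refine ⟨hodd hm, ?_⟩
    rw [← Fin.sum_mod_two_of_rev_of_odd R hpal hm, hsum, hS]
    omega
  -- row sums of the half problem: the middle row first reserves one unit per odd column
  set h : Fin m → ℕ := fun i =>
    if 2 * i.val + 1 < m then R i else if 2 * i.val + 1 = m then (R i - o) / 2 else 0
  have hfold : ∀ i, h i + h i.rev + (if 2 * i.val + 1 = m then o else 0) = R i := by
    intro i
    have := hpal i
    have := hmid i
    simp only [h, Fin.val_rev]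
    split_ifs <;> omega
  have hh : ∑ i, h i = ∑ j, S j / 2 := by
    have : ∑ i, (h i + h i.rev + if 2 * i.val + 1 = m then o else 0) = ∑ i, R i :=
      sum_congr rfl fun i _ => hfold i
    rw [sum_add_distrib, sum_add_distrib, Fin.sum_ite_two_mul_add_one_eq, smul_eq_mul, ho,
      Fin.sum_comp_rev] at this
    omega
  obtain ⟨A, hrow, hcol, hA⟩ :=
    exists_nat_mirror_symm_sum_rows_sum_cols h (fun j => S j / 2) (fun j => S j % 2) hh
  refine ⟨A, fun i => by rw [hrow, sum_mod_two_eq_card_odd, hfold], fun j => ?_, hA⟩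
  rw [hcol]
  rcases Nat.mod_two_eq_zero_or_one m with hm | hm
  · have := heven hm j
    rw [hm]
    omega
  · rw [hm]
    omega

theorem exists_nat_mirror_symm_iff (R : Fin m → ℕ) (S : Fin n → ℕ)
    (hsum : ∑ i, R i = ∑ j, S j) :
    (∃ A : Matrix (Fin m) (Fin n) ℕ, (∀ i, ∑ j, A i j = R i) ∧ (∀ j, ∑ i, A i j = S j) ∧
      ∀ i j, A i j = A i.rev j) ↔
    (∀ i, R i = R i.rev) ∧ (m % 2 = 0 → ∀ j, S j % 2 = 0) ∧
      ∀ hm : m % 2 = 1, #{j | S j % 2 = 1} ≤ R (Fin.middle hm) :=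
  ⟨fun ⟨A, hrow, hcol, hA⟩ => conditions_of_nat_mirror_symm R S A hrow hcol hA,
    fun ⟨hpal, heven, hodd⟩ => exists_nat_mirror_symm_of_conditions R S hsum hpal heven hodd⟩

theorem sum_mul_div_sum {ι : Type*} [Fintype ι] (f : ι → ℝ) (a : ℝ)
    (ha : ∑ i, f i = 0 → a = 0) :
    ∑ i, a * f i / ∑ i, f i = a := by
  by_cases hf : ∑ i, f i = 0
  · simp [ha hf]
  · rw [← sum_div, ← mul_sum, mul_div_cancel_right₀ _ hf]

theorem exists_real_mirror_symm_iff (R : Fin m → ℝ) (S : Fin n → ℝ) (hR : ∀ i, 0 ≤ R i)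
    (hS : ∀ j, 0 ≤ S j) (hsum : ∑ i, R i = ∑ j, S j) :
    (∃ A : Matrix (Fin m) (Fin n) ℝ, (∀ i j, 0 ≤ A i j) ∧ (∀ i, ∑ j, A i j = R i) ∧
      (∀ j, ∑ i, A i j = S j) ∧ ∀ i j, A i j = A i.rev j) ↔ ∀ i, R i = R i.rev := by
  refine ⟨fun ⟨A, _, hrow, _, hA⟩ i => ?_, fun hpal => ?_⟩
  · rw [← hrow, ← hrow]
    exact sum_congr rfl fun j _ => hA i j
  have hR0 := sum_eq_zero_iff_of_nonneg fun i (_ : i ∈ univ) => hR i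
  have hS0 := sum_eq_zero_iff_of_nonneg fun j (_ : j ∈ univ) => hS j
  refine ⟨fun i j => R i * S j / ∑ j, S j, fun i j => ?_, fun i => ?_, fun j => ?_,
    fun i j => by simp only [hpal i]⟩
  · exact div_nonneg (mul_nonneg (hR i) (hS j)) (sum_nonneg fun j _ => hS j)
  · exact sum_mul_div_sum S (R i) fun h => hR0.mp (hsum.trans h) i (mem_univ i)
  · simp only [← hsum, mul_comm (R _)]
    exact sum_mul_div_sum R (S j) fun h => hS0.mp (hsum ▸ h) j (mem_univ j)

end MirrorTransport

theorem horizontal_mirror_transportation (m n : ℕ) (R : Fin m → ℝ) (S : Fin n → ℝ)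
    (hR : ∀ i, 0 ≤ R i) (hS : ∀ j, 0 ≤ S j)
    (hsum : ∑ i, R i = ∑ j, S j) :
    ((∃ A : Matrix (Fin m) (Fin n) ℝ,
        (∀ i j, 0 ≤ A i j) ∧
        (∀ i, ∑ j, A i j = R i) ∧
        (∀ j, ∑ i, A i j = S j) ∧
        (∀ i j, A i j = A i.rev j)) ↔
      (∀ i, R i = R i.rev))
    ∧ (∀ (R' : Fin m → ℕ) (S' : Fin n → ℕ),
        (∀ i, (R' i : ℝ) = R i) → (∀ j, (S' j : ℝ) = S j) →
        ((∃ A : Matrix (Fin m) (Fin n) ℕ,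
            (∀ i, ∑ j, A i j = R' i) ∧
            (∀ j, ∑ i, A i j = S' j) ∧
            (∀ i j, A i j = A i.rev j)) ↔
          ((∀ i, R' i = R' i.rev) ∧
            (m % 2 = 0 → ∀ j, S' j % 2 = 0) ∧
            (∀ hm : m % 2 = 1,
              (Finset.univ.filter fun j => S' j % 2 = 1).card ≤ R' ⟨m / 2, by omega⟩)))) := by
  refine ⟨exists_real_mirror_symm_iff R S hR hS hsum, fun R' S' hR' hS' => ?_⟩
  have hsum' : ∑ i, R' i = ∑ j, S' j := by
    rw [← Nat.cast_inj (R := ℝ)]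
    push_cast
    simpa only [hR', hS'] using hsum
  exact exists_nat_mirror_symm_iff R' S' hsum'
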